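/- arXiv:1910.08902 — 3 statements merged into one kernel-verified Lean document; each statement's English description precedes it below -/
import Mathlib

section
/- Fix an integer n ≥ 1 and a real ε > 0. Let W be a finite nonempty set and φ : W → ℝⁿ an injective map. For ŵ ∈ W define the Voronoi cell C_ŵ = {z ∈ ℝⁿ : ‖z − φ(ŵ)‖ < ‖z − φ(u)‖ for all u ∈ W with u ≠ ŵ}, let Z_ε = ∫_{ℝⁿ} exp(−ε‖z‖) dz, let ν_ε be the probability measure on ℝⁿ with density z ↦ exp(−ε‖z‖)/Z_ε with respect to Lebesgue measure, and define the mechanism's output distribution by P_w(ŵ) = ν_ε({z ∈ ℝⁿ : φ(w) + z ∈ C_ŵ}). Then for all w, w', ŵ ∈ W: P_w(ŵ) ≤ exp(ε‖φ(w) − φ(w')‖) · P_{w'}(ŵ). -/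
open Real MeasureTheory

theorem mechanism_dchi_privacy_single_word
    (n : ℕ) (hn : 1 ≤ n) (ε : ℝ) (hε : 0 < ε)
    (W : Type*) [Fintype W] [Nonempty W]
    (φ : W → EuclideanSpace ℝ (Fin n)) (hφ : Function.Injective φ)
    (C : W → Set (EuclideanSpace ℝ (Fin n)))
    (hC : ∀ v : W, C v = {z | ∀ u : W, u ≠ v → ‖z - φ v‖ < ‖z - φ u‖})
    (Z : ℝ) (hZ : Z = ∫ z : EuclideanSpace ℝ (Fin n), Real.exp (-ε * ‖z‖))
    (ν : Measure (EuclideanSpace ℝ (Fin n)))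
    (hν : ν = volume.withDensity
      (fun z : EuclideanSpace ℝ (Fin n) => ENNReal.ofReal (Real.exp (-ε * ‖z‖) / Z)))
    (P : W → W → ENNReal)
    (hP : ∀ w v : W, P w v = ν {z : EuclideanSpace ℝ (Fin n) | φ w + z ∈ C v}) :
    ∀ w w' v : W,
      P w v ≤ ENNReal.ofReal (Real.exp (ε * ‖φ w - φ w'‖)) * P w' v := by
  intro w w' v
  set f : EuclideanSpace ℝ (Fin n) → ENNReal :=
    fun z => ENNReal.ofReal (Real.exp (-ε * ‖z‖) / Z) with hfdef
  have hfm : Measurable f := by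
    apply Measurable.ennreal_ofReal
    fun_prop
  have hZ0 : 0 ≤ Z := by
    rw [hZ]
    exact integral_nonneg fun z => (Real.exp_pos _).le
  have hCv : MeasurableSet (C v) := by
    rw [hC]
    have heq : {z : EuclideanSpace ℝ (Fin n) | ∀ u : W, u ≠ v → ‖z - φ v‖ < ‖z - φ u‖} =
        ⋂ u : W, {z : EuclideanSpace ℝ (Fin n) | u ≠ v → ‖z - φ v‖ < ‖z - φ u‖} := by
      ext z; simp [Set.mem_iInter]
    rw [heq]
    refine MeasurableSet.iInter fun u => ?_
    by_cases h : u = v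
    · simp [h]
    · have : {z : EuclideanSpace ℝ (Fin n) | u ≠ v → ‖z - φ v‖ < ‖z - φ u‖} =
          {z : EuclideanSpace ℝ (Fin n) | ‖z - φ v‖ < ‖z - φ u‖} := by
        ext z; simp [h]
      rw [this]
      exact measurableSet_lt (by fun_prop) (by fun_prop)
  have hSm : ∀ u : W, MeasurableSet {z : EuclideanSpace ℝ (Fin n) | φ u + z ∈ C v} :=
    fun u => hCv.preimage (measurable_const_add (φ u))
  set t : EuclideanSpace ℝ (Fin n) := φ w - φ w' with ht
  have hpre : {z : EuclideanSpace ℝ (Fin n) | φ w + z ∈ C v} =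
      (fun z : EuclideanSpace ℝ (Fin n) => z + t) ⁻¹'
        {z : EuclideanSpace ℝ (Fin n) | φ w' + z ∈ C v} := by
    ext z
    simp only [Set.mem_preimage, Set.mem_setOf_eq, ht]
    have : φ w' + (z + (φ w - φ w')) = φ w + z := by abel
    rw [this]
  have hmp : MeasurePreserving (fun z : EuclideanSpace ℝ (Fin n) => z + t) volume volume :=
    measurePreserving_add_right volume t
  have hemb : MeasurableEmbedding (fun z : EuclideanSpace ℝ (Fin n) => z + t) :=
    (Homeomorph.addRight t).measurableEmbedding
  have key : ∫⁻ z in {z : EuclideanSpace ℝ (Fin n) | φ w + z ∈ C v}, f z ∂volume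
      = ∫⁻ y in {z : EuclideanSpace ℝ (Fin n) | φ w' + z ∈ C v}, f (y - t) ∂volume := by
    rw [hpre]
    have := hmp.setLIntegral_comp_preimage_emb hemb (fun y => f (y - t))
      {z : EuclideanSpace ℝ (Fin n) | φ w' + z ∈ C v}
    simpa using this
  have hpoint : ∀ y : EuclideanSpace ℝ (Fin n), f (y - t) ≤
      ENNReal.ofReal (Real.exp (ε * ‖t‖)) * f y := by
    intro y
    rw [hfdef]
    dsimp only
    rw [← ENNReal.ofReal_mul (Real.exp_pos _).le]
    apply ENNReal.ofReal_le_ofReal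
    rw [div_eq_mul_inv, mul_div_assoc' , div_eq_mul_inv]
    apply mul_le_mul_of_nonneg_right _ (inv_nonneg.mpr hZ0)
    rw [← Real.exp_add]
    apply Real.exp_le_exp.mpr
    have h1 : ‖y‖ - ‖t‖ ≤ ‖y - t‖ := norm_sub_norm_le y t
    nlinarith [hε.le]
  calc P w v = ∫⁻ z in {z : EuclideanSpace ℝ (Fin n) | φ w + z ∈ C v}, f z ∂volume := by
        rw [hP, hν, withDensity_apply _ (hSm w)]
    _ = ∫⁻ y in {z : EuclideanSpace ℝ (Fin n) | φ w' + z ∈ C v}, f (y - t) ∂volume := key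
    _ ≤ ∫⁻ y in {z : EuclideanSpace ℝ (Fin n) | φ w' + z ∈ C v},
          ENNReal.ofReal (Real.exp (ε * ‖t‖)) * f y ∂volume :=
        lintegral_mono fun y => hpoint y
    _ = ENNReal.ofReal (Real.exp (ε * ‖t‖)) *
          ∫⁻ y in {z : EuclideanSpace ℝ (Fin n) | φ w' + z ∈ C v}, f y ∂volume :=
        lintegral_const_mul _ hfm
    _ = ENNReal.ofReal (Real.exp (ε * ‖φ w - φ w'‖)) * P w' v := by
        rw [hP, hν, withDensity_apply _ (hSm w'), ht]
end

section
/- Fix an integer n ≥ 1, a real ε > 0, and an integer ℓ ≥ 1. Let W be a finite nonempty set and φ : W → ℝⁿ an injective map. For ŵ ∈ W define the Voronoi cell C_ŵ = {z ∈ ℝⁿ : ‖z − φ(ŵ)‖ < ‖z − φ(u)‖ for all u ∈ W with u ≠ ŵ}, let Z_ε = ∫_{ℝⁿ} exp(−ε‖z‖) dz, let ν_ε be the probability measure on ℝⁿ with density z ↦ exp(−ε‖z‖)/Z_ε with respect to Lebesgue measure, and define P_w(ŵ) = ν_ε({z ∈ ℝⁿ : φ(w) + z ∈ C_ŵ}).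 For strings x = (w_1, …, w_ℓ) ∈ W^ℓ define Q_x(x̂) = ∏_{i=1}^{ℓ} P_{w_i}(ŵ_i) and d(x, x') = Σ_{i=1}^{ℓ} ‖φ(w_i) − φ(w'_i)‖. Then for all x, x', x̂ ∈ W^ℓ: Q_x(x̂) ≤ exp(ε · d(x, x')) · Q_{x'}(x̂). -/
open Real MeasureTheory

theorem mechanism_dchi_privacy_strings
    (n : ℕ) (hn : 1 ≤ n) (ε : ℝ) (hε : 0 < ε) (ℓ : ℕ) (hℓ : 1 ≤ ℓ)
    (W : Type*) [Fintype W] [Nonempty W]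
    (φ : W → EuclideanSpace ℝ (Fin n)) (hφ : Function.Injective φ)
    (C : W → Set (EuclideanSpace ℝ (Fin n)))
    (hC : ∀ v : W, C v = {z | ∀ u : W, u ≠ v → ‖z - φ v‖ < ‖z - φ u‖})
    (Z : ℝ) (hZ : Z = ∫ z : EuclideanSpace ℝ (Fin n), Real.exp (-ε * ‖z‖))
    (ν : Measure (EuclideanSpace ℝ (Fin n)))
    (hν : ν = volume.withDensity
      (fun z : EuclideanSpace ℝ (Fin n) => ENNReal.ofReal (Real.exp (-ε * ‖z‖) / Z)))
    (P : W → W → ENNReal)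
    (hP : ∀ w v : W, P w v = ν {z : EuclideanSpace ℝ (Fin n) | φ w + z ∈ C v})
    (Q : (Fin ℓ → W) → (Fin ℓ → W) → ENNReal)
    (hQ : ∀ x y : Fin ℓ → W, Q x y = ∏ i : Fin ℓ, P (x i) (y i))
    (d : (Fin ℓ → W) → (Fin ℓ → W) → ℝ)
    (hd : ∀ x x' : Fin ℓ → W, d x x' = ∑ i : Fin ℓ, ‖φ (x i) - φ (x' i)‖) :
    ∀ x x' y : Fin ℓ → W,
      Q x y ≤ ENNReal.ofReal (Real.exp (ε * d x x')) * Q x' y := by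
  -- measurability of Voronoi cells
  have hCm : ∀ v : W, MeasurableSet (C v) := by
    intro v
    rw [hC v]
    have : {z : EuclideanSpace ℝ (Fin n) | ∀ u : W, u ≠ v → ‖z - φ v‖ < ‖z - φ u‖}
        = ⋂ u : W, ⋂ _ : u ≠ v, {z | ‖z - φ v‖ < ‖z - φ u‖} := by
      ext z; simp [Set.mem_iInter]
    rw [this]
    refine MeasurableSet.iInter fun u => MeasurableSet.iInter fun _ => ?_
    exact measurableSet_lt (by fun_prop) (by fun_prop)
  -- representation of P w v as an integral over C v
  have hrepr : ∀ w v : W,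
      P w v = ∫⁻ y in C v, ENNReal.ofReal (Real.exp (-ε * ‖y - φ w‖) / Z) := by
    intro w v
    have hg : MeasurePreserving (fun z : EuclideanSpace ℝ (Fin n) => φ w + z)
        volume volume := measurePreserving_add_left volume (φ w)
    have hSm : MeasurableSet {z : EuclideanSpace ℝ (Fin n) | φ w + z ∈ C v} :=
      hg.measurable (hCm v)
    have hfm : Measurable fun y : EuclideanSpace ℝ (Fin n) =>
        ENNReal.ofReal (Real.exp (-ε * ‖y - φ w‖) / Z) := by fun_prop
    rw [hP, hν, withDensity_apply _ hSm]
    calc ∫⁻ z in {z | φ w + z ∈ C v}, ENNReal.ofReal (Real.exp (-ε * ‖z‖) / Z)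
        = ∫⁻ z in (fun z => φ w + z) ⁻¹' C v,
            ENNReal.ofReal (Real.exp (-ε * ‖(φ w + z) - φ w‖) / Z) := by
          congr 1; ext z; simp
      _ = ∫⁻ y in C v, ENNReal.ofReal (Real.exp (-ε * ‖y - φ w‖) / Z) := by
          rw [← setLIntegral_map (hCm v) hfm hg.measurable, hg.map_eq]
  -- per-word inequality
  have key : ∀ w w' v : W,
      P w v ≤ ENNReal.ofReal (Real.exp (ε * ‖φ w - φ w'‖)) * P w' v := by
    intro w w' v
    rw [hrepr w v, hrepr w' v, ← lintegral_const_mul' _ _ ENNReal.ofReal_ne_top]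
    refine setLIntegral_mono' (hCm v) fun y _ => ?_
    rcases le_or_gt Z 0 with hZ0 | hZ0
    · have h0 : ENNReal.ofReal (Real.exp (-(ε * ‖y - φ w‖)) / Z) = 0 := by
        rw [ENNReal.ofReal_eq_zero]
        exact div_nonpos_of_nonneg_of_nonpos (Real.exp_pos _).le hZ0
      simp [h0]
    · have htri : ‖y - φ w'‖ ≤ ‖y - φ w‖ + ‖φ w - φ w'‖ := by
        have := norm_sub_le_norm_sub_add_norm_sub y (φ w) (φ w')
        linarith [norm_sub_le (y - φ w) (φ w' - φ w)]
      have hexp : Real.exp (-ε * ‖y - φ w‖)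
          ≤ Real.exp (ε * ‖φ w - φ w'‖) * Real.exp (-ε * ‖y - φ w'‖) := by
        rw [← Real.exp_add]
        apply Real.exp_le_exp.mpr
        nlinarith [hε.le]
      rw [← ENNReal.ofReal_mul (Real.exp_pos _).le]
      apply ENNReal.ofReal_le_ofReal
      rw [mul_div_assoc']
      gcongr
  -- assemble
  intro x x' y
  rw [hQ, hQ, hd]
  calc ∏ i : Fin ℓ, P (x i) (y i)
      ≤ ∏ i : Fin ℓ, (ENNReal.ofReal (Real.exp (ε * ‖φ (x i) - φ (x' i)‖)) * P (x' i) (y i)) :=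
        Finset.prod_le_prod' fun i _ => key (x i) (x' i) (y i)
    _ = (∏ i : Fin ℓ, ENNReal.ofReal (Real.exp (ε * ‖φ (x i) - φ (x' i)‖)))
          * ∏ i : Fin ℓ, P (x' i) (y i) := Finset.prod_mul_distrib
    _ = ENNReal.ofReal (Real.exp (ε * ∑ i : Fin ℓ, ‖φ (x i) - φ (x' i)‖))
          * ∏ i : Fin ℓ, P (x' i) (y i) := by
        rw [← ENNReal.ofReal_prod_of_nonneg (fun i _ => (Real.exp_pos _).le),
          ← Real.exp_sum, Finset.mul_sum]
end

section
/- Fix an integer n ≥ 1 and a real ε > 0. Let μ be the uniform probability measure on the unit sphere S^{n−1} = {v ∈ ℝⁿ : ‖v‖ = 1}, and let γ be the Gamma distribution on ℝ with shape parameter n and rate ε (i.e., with density x ↦ x^{n−1} e^{−εx} εⁿ / Γ(n) on x > 0). Then the pushforward of the product measure γ ⊗ μ under the map (l, v) ↦ l·v is the probability measure on ℝⁿ with density z ↦ exp(−ε‖z‖)/Z_ε with respect to Lebesgue measure, where Z_ε = ∫_{ℝⁿ} exp(−ε‖z‖) dz. -/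
open Real MeasureTheory Metric Set
open scoped ENNReal
set_option maxHeartbeats 1000000

namespace GammaSphereAux

variable {α β : Type*} [MeasurableSpace α] [MeasurableSpace β]

lemma prod_withDensity_right (μ : Measure α) (ν : Measure β) [SFinite ν]
    {f : β → ℝ≥0∞} (hf : Measurable f) :
    μ.prod (ν.withDensity f) = (μ.prod ν).withDensity (fun p => f p.2) := by
  ext s hs
  rw [Measure.prod_apply hs, withDensity_apply _ hs]
  calc ∫⁻ x, (ν.withDensity f) (Prod.mk x ⁻¹' s) ∂μ
      = ∫⁻ x, ∫⁻ y, s.indicator (fun p : α × β => f p.2) (x, y) ∂ν ∂μ := by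
        refine lintegral_congr fun x => ?_
        rw [withDensity_apply _ (measurable_prodMk_left hs),
          ← lintegral_indicator (measurable_prodMk_left hs) f]
        refine lintegral_congr fun y => ?_
        by_cases h : (x, y) ∈ s <;>
          simp [Set.indicator_apply, h, Set.mem_preimage]
    _ = ∫⁻ p, s.indicator (fun p : α × β => f p.2) p ∂(μ.prod ν) :=
        (lintegral_prod _ ((hf.comp measurable_snd).indicator hs).aemeasurable).symm
    _ = ∫⁻ p in s, f p.2 ∂(μ.prod ν) := lintegral_indicator hs _

lemma smul_prod (c : ℝ≥0∞) (μ : Measure α) (ν : Measure β) [SFinite ν] :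
    (c • μ).prod ν = c • (μ.prod ν) := by
  ext s hs
  rw [Measure.prod_apply hs, Measure.smul_apply, Measure.prod_apply hs,
    lintegral_smul_measure, smul_eq_mul]

lemma map_withDensity_comp (μ : Measure α) {f : α → β} (hf : Measurable f)
    {g : β → ℝ≥0∞} (hg : Measurable g) :
    Measure.map f (μ.withDensity (g ∘ f)) = (Measure.map f μ).withDensity g := by
  ext s hs
  rw [Measure.map_apply hf hs, withDensity_apply _ (hf hs), withDensity_apply _ hs,
    setLIntegral_map hs hg hf]
  rfl

end GammaSphereAux

open GammaSphereAux ProbabilityTheory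

theorem gamma_times_uniform_sphere_gives_noise_density
    (n : ℕ) (hn : 1 ≤ n) (ε : ℝ) (hε : 0 < ε)
    (μ : Measure (sphere (0 : EuclideanSpace ℝ (Fin n)) 1))
    (hμ : μ = ((volume : Measure (EuclideanSpace ℝ (Fin n))).toSphere Set.univ)⁻¹ •
      (volume : Measure (EuclideanSpace ℝ (Fin n))).toSphere)
    (γ : Measure ℝ) (hγ : γ = ProbabilityTheory.gammaMeasure n ε)
    (Z : ℝ) (hZ : Z = ∫ z : EuclideanSpace ℝ (Fin n), Real.exp (-ε * ‖z‖)) :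
    Measure.map
      (fun p : ℝ × sphere (0 : EuclideanSpace ℝ (Fin n)) 1 =>
        p.1 • (p.2 : EuclideanSpace ℝ (Fin n)))
      (γ.prod μ) =
    volume.withDensity
      (fun z : EuclideanSpace ℝ (Fin n) => ENNReal.ofReal (Real.exp (-ε * ‖z‖) / Z)) := by
  subst hμ hγ hZ
  set E := EuclideanSpace ℝ (Fin n) with hE
  haveI : Nonempty (Fin n) := Fin.pos_iff_nonempty.mp hn
  haveI : Nontrivial E := inferInstance
  have h_dim : Module.finrank ℝ E = n := finrank_euclideanSpace_fin
  set c : ℝ≥0∞ := (volume : Measure E).toSphere Set.univ with hc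
  have hn' : (0:ℝ) < n := by exact_mod_cast hn
  have hΓ : 0 < Real.Gamma n := Real.Gamma_pos_of_pos hn'
  have hc_top : c ≠ ⊤ := measure_ne_top _ _
  have hc0 : c ≠ 0 := by
    rw [hc, Measure.toSphere_apply_univ, h_dim]
    exact mul_ne_zero (by exact_mod_cast (by omega : n ≠ 0)) (measure_ball_pos _ _ one_pos).ne'
  have hC : 0 < c.toReal := ENNReal.toReal_pos hc0 hc_top
  -- the inner radial integral
  have hinner : (∫ y in Ioi (0:ℝ), y ^ (n-1) • Real.exp (-ε * y))
      = (1/ε) ^ (n:ℝ) * Real.Gamma n := by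
    rw [← integral_rpow_mul_exp_neg_mul_Ioi hn' hε]
    refine setIntegral_congr_fun measurableSet_Ioi fun y hy => ?_
    rw [smul_eq_mul, ← Real.rpow_natCast y (n-1), Nat.cast_sub hn, Nat.cast_one, neg_mul]
  -- the value of Z
  have hZval : (∫ z : E, Real.exp (-ε * ‖z‖))
      = c.toReal * ((1/ε) ^ (n:ℝ) * Real.Gamma n) := by
    have h1 := integral_fun_norm_addHaar (volume : Measure E)
      (fun y => Real.exp (-ε * y))
    rw [h_dim] at h1
    rw [h1, hinner, hc, Measure.toSphere_apply_univ, h_dim, ENNReal.toReal_mul,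
      ENNReal.toReal_natCast, nsmul_eq_mul, smul_eq_mul, measureReal_def]
    ring
  set Z := ∫ z : E, Real.exp (-ε * ‖z‖)
  -- the map T and its pushforward of the polar product measure
  set T : sphere (0:E) 1 × Ioi (0:ℝ) → E := fun p => (p.2 : ℝ) • (p.1 : E) with hT
  have hT_meas : Measurable T :=
    ((continuous_subtype_val.comp continuous_snd).smul
      (continuous_subtype_val.comp continuous_fst)).measurable
  have hmapT : Measure.map T
      ((volume : Measure E).toSphere.prod (Measure.volumeIoiPow (n-1))) = volume := by
    have h1 := (Measure.measurePreserving_homeomorphUnitSphereProd (volume : Measure E)).map_eq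
    rw [h_dim] at h1
    have hTeq : T = (Subtype.val : ({0}ᶜ : Set E) → E) ∘ (homeomorphUnitSphereProd E).symm := by
      funext p
      simp [hT, homeomorphUnitSphereProd_symm_apply_coe]
    rw [hTeq, ← Measure.map_map measurable_subtype_coe (Homeomorph.measurable _), ← h1,
      Measure.map_map (Homeomorph.measurable _) (Homeomorph.measurable _),
      Homeomorph.symm_comp_self, Measure.map_id,
      map_comap_subtype_coe (measurableSet_singleton (0:E)).compl,
      MeasureTheory.restrict_compl_singleton]
  -- the gamma measure as a pushforward from the positive half-line
  set γ' : Measure (Ioi (0:ℝ)) := (Measure.volumeIoiPow (n-1)).withDensity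
    (fun r => ENNReal.ofReal (ε ^ n / Real.Gamma n * Real.exp (-ε * r.1))) with hγ'def
  have hh_meas : Measurable (fun r : Ioi (0:ℝ) =>
      ENNReal.ofReal (ε ^ n / Real.Gamma n * Real.exp (-ε * r.1))) := by
    refine Measurable.ennreal_ofReal ?_
    exact measurable_const.mul (Real.measurable_exp.comp (measurable_subtype_coe.const_mul (-ε)))
  have hγ' : gammaMeasure n ε = Measure.map (Subtype.val : Ioi (0:ℝ) → ℝ) γ' := by
    have hfun : (fun r : Ioi (0:ℝ) => ENNReal.ofReal ((r:ℝ) ^ (n-1)) *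
        ENNReal.ofReal (ε ^ n / Real.Gamma n * Real.exp (-ε * r.1)))
        = (gammaPDF n ε) ∘ (Subtype.val : Ioi (0:ℝ) → ℝ) := by
      funext r
      rw [Function.comp_apply, gammaPDF_of_nonneg (le_of_lt r.2),
        ← ENNReal.ofReal_mul (pow_nonneg (le_of_lt r.2) _)]
      congr 1
      rw [Real.rpow_natCast, ← Real.rpow_natCast r.1 (n-1), Nat.cast_sub hn,
        Nat.cast_one, neg_mul]
      ring
    have hγ'2 : γ' = (Measure.comap (Subtype.val) (volume : Measure ℝ)).withDensity
        ((gammaPDF n ε) ∘ (Subtype.val : Ioi (0:ℝ) → ℝ)) := by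
      rw [hγ'def, Measure.volumeIoiPow,
        ← withDensity_mul _ ((measurable_subtype_coe.pow_const _).ennreal_ofReal) hh_meas,
        ← hfun]
      rfl
    have hgp_meas : Measurable (gammaPDF n ε) := (measurable_gammaPDFReal _ _).ennreal_ofReal
    rw [hγ'2, map_withDensity_comp _ measurable_subtype_coe hgp_meas,
      map_comap_subtype_coe measurableSet_Ioi, ← restrict_withDensity measurableSet_Ioi]
    rw [show (volume : Measure ℝ).withDensity (gammaPDF n ε) = gammaMeasure n ε from rfl]
    refine (Measure.restrict_eq_self_of_ae_mem ?_).symm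
    rw [ae_iff]
    have : {x : ℝ | ¬ x ∈ Ioi (0:ℝ)} = Iic 0 := by ext x; simp
    rw [this, gammaMeasure, withDensity_apply _ measurableSet_Iic,
      ← setLIntegral_congr (Iio_ae_eq_Iic (a := (0:ℝ)))]
    exact lintegral_gammaPDF_of_nonpos le_rfl
  -- the density function
  set G : E → ℝ≥0∞ := fun z => ENNReal.ofReal (ε ^ n / Real.Gamma n * Real.exp (-ε * ‖z‖))
    with hG
  have hG_meas : Measurable G := by
    apply Measurable.ennreal_ofReal
    exact (continuous_const.mul ((continuous_const.mul continuous_norm).rexp)).measurable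
  have hGT : (fun p : sphere (0:E) 1 × Ioi (0:ℝ) =>
      ENNReal.ofReal (ε ^ n / Real.Gamma n * Real.exp (-ε * p.2.1))) = G ∘ T := by
    funext p
    have : ‖(p.2 : ℝ) • (p.1 : E)‖ = p.2.1 := by
      rw [norm_smul, mem_sphere_zero_iff_norm.mp p.1.2, mul_one, Real.norm_eq_abs,
        abs_of_pos p.2.2]
    simp only [hG, Function.comp_apply, hT, this]
  -- the main chain of equalities
  calc Measure.map (fun p : ℝ × sphere (0:E) 1 => p.1 • (p.2 : E))
        ((gammaMeasure n ε).prod (c⁻¹ • (volume : Measure E).toSphere))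
      = Measure.map (fun p : ℝ × sphere (0:E) 1 => p.1 • (p.2 : E))
          (Measure.map (Prod.map (Subtype.val : Ioi (0:ℝ) → ℝ) id)
            (γ'.prod (c⁻¹ • (volume : Measure E).toSphere))) := by
        rw [← Measure.map_prod_map _ _ measurable_subtype_coe measurable_id, ← hγ',
          Measure.map_id]
    _ = Measure.map (fun q : Ioi (0:ℝ) × sphere (0:E) 1 => (q.1 : ℝ) • (q.2 : E))
          (γ'.prod (c⁻¹ • (volume : Measure E).toSphere)) := by
        have hS_meas : Measurable (fun p : ℝ × sphere (0:E) 1 => p.1 • (p.2 : E)) :=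
          (continuous_fst.smul (continuous_subtype_val.comp continuous_snd)).measurable
        rw [Measure.map_map hS_meas (measurable_subtype_coe.prodMap measurable_id)]
        rfl
    _ = Measure.map T ((c⁻¹ • (volume : Measure E).toSphere).prod γ') := by
        have hq_meas : Measurable (fun q : Ioi (0:ℝ) × sphere (0:E) 1 => (q.1 : ℝ) • (q.2 : E)) :=
          ((continuous_subtype_val.comp continuous_fst).smul
            (continuous_subtype_val.comp continuous_snd)).measurable
        rw [← Measure.prod_swap, Measure.map_map hq_meas measurable_swap]
        rfl
    _ = c⁻¹ • Measure.map T
          (((volume : Measure E).toSphere.prod (Measure.volumeIoiPow (n-1))).withDensity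
            (G ∘ T)) := by
        rw [smul_prod, Measure.map_smul, hγ'def,
          prod_withDensity_right _ _ hh_meas, hGT]
    _ = c⁻¹ • (volume : Measure E).withDensity G := by
        rw [map_withDensity_comp _ hT_meas hG_meas, hmapT]
    _ = (volume : Measure E).withDensity (fun z => ENNReal.ofReal (Real.exp (-ε * ‖z‖) / Z)) := by
        rw [← withDensity_smul _ hG_meas]
        congr 1
        funext z
        have he : 0 ≤ Real.exp (-ε * ‖z‖) := (Real.exp_pos _).le
        have hI0 : 0 < (1/ε) ^ (n:ℝ) * Real.Gamma n :=
          mul_pos (Real.rpow_pos_of_pos (by positivity) _) hΓ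
        have harg : Real.exp (-ε * ‖z‖) / Z
            = 1/c.toReal * (ε ^ n / Real.Gamma n * Real.exp (-ε * ‖z‖)) := by
          rw [hZval]
          have hrp : (1/ε : ℝ) ^ (n:ℝ) = (ε ^ n)⁻¹ := by
            rw [Real.rpow_natCast, one_div, inv_pow]
          rw [hrp]
          field_simp
        rw [Pi.smul_apply, hG, smul_eq_mul, harg,
          ENNReal.ofReal_mul (by positivity), one_div,
          ENNReal.ofReal_inv_of_pos hC, ENNReal.ofReal_toReal hc_top]
end
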